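/- For odd n ≥ 3, m(n) ≤ (n+1) · 2^{n-2} + (n-1) · m(n-2). -/

import Mathlib

/-- A family of finsets is `n`-uniform if every hyperedge has `n` elements. -/
def IsUniform (n : ℕ) (E : Finset (Finset ℕ)) : Prop := ∀ e ∈ E, e.card = n

/-- A hypergraph (family of hyperedges) is 2-colorable if there is a Red/Blue
coloring of the vertices such that no hyperedge is monochromatic. -/
def Colorable2 (E : Finset (Finset ℕ)) : Prop :=
  ∃ χ : ℕ → Bool, ∀ e ∈ E, (∃ v ∈ e, χ v = true) ∧ (∃ v ∈ e, χ v = false)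

/-- `m n` is the least number of hyperedges in a non-2-colorable `n`-uniform hypergraph. -/
noncomputable def m (n : ℕ) : ℕ :=
  sInf {k | ∃ E : Finset (Finset ℕ), IsUniform n E ∧ ¬ Colorable2 E ∧ E.card = k}

/-- A hyperedge is monochromatic under `χ` if all its vertices get the same color. -/
def Mono (χ : ℕ → Bool) (s : Finset ℕ) : Prop :=
  (∀ x ∈ s, χ x = true) ∨ (∀ x ∈ s, χ x = false)

/-!
Take a non-2-colorable `(n-2)`-uniform core with `m (n-2)` edges and new vertices `u_i, v_i`,
`i < n`. A coloring makes some core edge `e` monochromatic of colour `c`, and the diagonal edges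
`{u_i, v_i} ∪ e`, `i ≠ 0`, then forbid `u_i, v_i` both coloured `c`. For a pairing `σ` of the
indices, the parity edges pick one of `u_i, v_{σ i}` for every `i`, with an odd number of `u`'s;
since `n` is odd, all of them avoid being monochromatic only if for each colour some pair
`u_i, v_{σ i}` has that colour at both ends. The identity pairing thus forces `u_0, v_0` to have
colour `c` and some `u_j, v_j`, `j ≠ 0`, to have the other colour, and then the pairing that swaps
`0` and `j` has no pair coloured `c`. Parity edges of the pairing swapping `0` and `p` coincide
with those of the identity unless the index set separates `0` from `p`, which gives the count
`2^(n-1) + (n-1) 2^(n-2) = (n+1) 2^(n-2)`.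
-/

open Finset

lemma Mono.of_forall_eq {χ : ℕ → Bool} {s : Finset ℕ} {c : Bool}
    (h : ∀ x ∈ s, χ x = c) : Mono χ s := by
  cases c
  exacts [Or.inr h, Or.inl h]

lemma Mono.exists_forall_eq {χ : ℕ → Bool} {s : Finset ℕ} (h : Mono χ s) :
    ∃ c, ∀ x ∈ s, χ x = c :=
  h.elim (⟨true, ·⟩) (⟨false, ·⟩)

lemma not_mono_iff {χ : ℕ → Bool} {s : Finset ℕ} :
    ¬ Mono χ s ↔ (∃ v ∈ s, χ v = true) ∧ (∃ v ∈ s, χ v = false) := by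
  simp only [Mono, not_or, not_forall, Bool.not_eq_true, Bool.not_eq_false, exists_prop, and_comm]

lemma not_colorable2_iff {E : Finset (Finset ℕ)} :
    ¬ Colorable2 E ↔ ∀ χ : ℕ → Bool, ∃ e ∈ E, Mono χ e := by
  simp only [Colorable2, ← not_mono_iff, not_exists, not_forall, not_not, exists_prop]

lemma not_colorable2_powersetCard (k : ℕ) :
    ¬ Colorable2 ((range (2 * k - 1)).powersetCard k) := by
  refine not_colorable2_iff.2 fun χ => ?_
  obtain ⟨c, hc⟩ : ∃ c, k ≤ #{x ∈ range (2 * k - 1) | χ x = c} := by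
    have hsplit := card_filter_add_card_filter_not (s := range (2 * k - 1)) (χ · = true)
    simp only [Bool.not_eq_true, card_range] at hsplit
    by_contra! h
    have := h true
    have := h false
    omega
  obtain ⟨t, ht, htk⟩ := exists_subset_card_eq hc
  exact ⟨t, mem_powersetCard.2 ⟨ht.trans (filter_subset _ _), htk⟩,
    Mono.of_forall_eq fun x hx => (mem_filter.1 (ht hx)).2⟩

lemma exists_isUniform_not_colorable2_card_eq_m (k : ℕ) :
    ∃ E, IsUniform k E ∧ ¬ Colorable2 E ∧ #E = m k :=
  Nat.sInf_mem
    (s := {j | ∃ E : Finset (Finset ℕ), IsUniform k E ∧ ¬ Colorable2 E ∧ #E = j})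
    ⟨_, _, fun _ he => (mem_powersetCard.1 he).2, not_colorable2_powersetCard k, rfl⟩

lemma m_le_card {n : ℕ} {E : Finset (Finset ℕ)} (hU : IsUniform n E) (hE : ¬ Colorable2 E) :
    m n ≤ #E :=
  Nat.sInf_le ⟨E, hU, hE, rfl⟩

lemma IsUniform.union {n : ℕ} {E F : Finset (Finset ℕ)} (hE : IsUniform n E)
    (hF : IsUniform n F) : IsUniform n (E ∪ F) := by
  intro e he
  rcases mem_union.1 he with he | he
  exacts [hE e he, hF e he]

namespace Finset

variable {α : Type*} [DecidableEq α]

lemma eq_of_erase_eq_of_card_mod_two_eq {a : α} {s t : Finset α} (hst : #s % 2 = #t % 2)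
    (h : s.erase a = t.erase a) : s = t := by
  have hcard := congrArg card h
  by_cases hs : a ∈ s <;> by_cases ht : a ∈ t
  · rw [← insert_erase hs, h, insert_erase ht]
  · rw [card_erase_of_mem hs, erase_eq_of_notMem ht] at hcard
    have := card_pos.2 ⟨a, hs⟩
    omega
  · rw [card_erase_of_mem ht, erase_eq_of_notMem hs] at hcard
    have := card_pos.2 ⟨a, ht⟩
    omega
  · rwa [erase_eq_of_notMem hs, erase_eq_of_notMem ht] at h

lemma card_powerset_filter_card_mod_two_le {s : Finset α} {a : α} (ha : a ∈ s) (r : ℕ) :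
    #{t ∈ s.powerset | #t % 2 = r} ≤ 2 ^ (#s - 1) :=
  calc #{t ∈ s.powerset | #t % 2 = r}
      ≤ #(s.erase a).powerset := by
        refine card_le_card_of_injOn (·.erase a) (fun t ht => ?_) fun t ht t' ht' h => ?_
        · simp only [coe_filter, mem_powerset, Set.mem_ofPred_eq, coe_powerset,
            Set.mem_preimage] at ht ⊢
          exact erase_subset_erase a ht.1
        · simp only [coe_filter, mem_powerset, Set.mem_ofPred_eq] at ht ht'
          exact eq_of_erase_eq_of_card_mod_two_eq (ht.2.trans ht'.2.symm) h
    _ = 2 ^ (#s - 1) := by rw [card_powerset, card_erase_of_mem ha]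

lemma insert_sdiff_pair_eq {a b : α} {s : Finset α} (h : ¬(a ∈ s ↔ b ∈ s)) :
    insert (if a ∈ s then a else b) (s \ {a, b}) = s := by
  ext x
  by_cases ha : a ∈ s <;> by_cases hxa : x = a <;> by_cases hxb : x = b <;> simp_all

lemma card_sdiff_pair_add_one {a b : α} {s : Finset α} (h : ¬(a ∈ s ↔ b ∈ s)) :
    #(s \ {a, b}) + 1 = #s := by
  conv_rhs => rw [← insert_sdiff_pair_eq h]
  rw [card_insert_of_notMem (by split_ifs <;> simp)]

lemma image_swap_eq_self {s : Finset α} {a b : α} (h : a ∈ s ↔ b ∈ s) :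
    s.image (Equiv.swap a b) = s := by
  ext x
  rw [← Equiv.coe_toEmbedding, ← map_eq_image, mem_map_equiv, Equiv.symm_swap]
  by_cases hxa : x = a
  · simp [hxa, h]
  by_cases hxb : x = b
  · simp [hxb, h]
  rw [Equiv.swap_apply_of_ne_of_ne hxa hxb]

end Finset

/- With `W = {b = c} ⊆ A = {a = !c}`, any odd `S` with `W ⊆ S ⊆ A` works for `d = !c`; if none
exists then `W = A` is even, and its odd complement works for `d = c`. -/
lemma exists_odd_subset_const_of_not_both {ι : Type*} [DecidableEq ι] {s : Finset ι}
    (hs : Odd #s) (a b : ι → Bool) {c : Bool} (h : ∀ i ∈ s, a i = c → b i ≠ c) :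
    ∃ d, ∃ S ⊆ s, Odd #S ∧ (∀ i ∈ S, a i = d) ∧ ∀ i ∈ s \ S, b i = d := by
  set W := {i ∈ s | b i = c}
  set A := {i ∈ s | a i = !c}
  have hWA : W ⊆ A := fun i hi => by
    simp only [W, A, mem_filter] at hi ⊢
    exact ⟨hi.1, Bool.eq_not.2 fun hac => h i hi.1 hac hi.2⟩
  have hb : ∀ i ∈ s \ W, b i = !c := fun i hi => by
    simp only [W, mem_sdiff, mem_filter, not_and] at hi
    exact Bool.eq_not.2 (hi.2 hi.1)
  by_cases hW : Odd #W
  · exact ⟨!c, W, filter_subset _ _, hW, fun i hi => (mem_filter.1 (hWA hi)).2, hb⟩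
  rw [Nat.not_odd_iff_even] at hW
  by_cases hAW : A ⊆ W
  · refine ⟨c, s \ W, sdiff_subset, ?_, fun i hi => ?_, fun i hi => ?_⟩
    · rw [card_sdiff_of_subset (filter_subset _ _)]
      exact Nat.Odd.sub_even (card_le_card (filter_subset _ _)) hs hW
    · simp only [mem_sdiff] at hi
      have : i ∉ A := fun hiA => hi.2 (hAW hiA)
      simpa [A, hi.1] using this
    · simp only [mem_sdiff, not_and, not_not] at hi
      exact (mem_filter.1 (hi.2 hi.1)).2
  obtain ⟨x, hxA, hxW⟩ := not_subset.1 hAW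
  refine ⟨!c, insert x W, insert_subset (filter_subset _ _ hxA) (filter_subset _ _), ?_,
    fun i hi => ?_, fun i hi => hb i (sdiff_subset_sdiff subset_rfl (subset_insert _ _) hi)⟩
  · rw [card_insert_of_notMem hxW]
    exact hW.add_one
  · rcases mem_insert.1 hi with rfl | hi
    exacts [(mem_filter.1 hxA).2, (mem_filter.1 (hWA hi)).2]

namespace ParityConstruction

/- `U`, `V` and the core live on the residues `0`, `1`, `2` mod 3. Indices are 0-based: the
paper's `v_1` is `vVert 0`, and its pairing `V^p` matches `uVert i` with
`vVert (Equiv.swap 0 p i)`. -/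
def uVert (i : ℕ) : ℕ := 3 * i

def vVert (j : ℕ) : ℕ := 3 * j + 1

def coreVert (x : ℕ) : ℕ := 3 * x + 2

lemma uVert_injective : Function.Injective uVert := fun _ _ h => by
  simp only [uVert] at h; omega

lemma vVert_injective : Function.Injective vVert := fun _ _ h => by
  simp only [vVert] at h; omega

lemma coreVert_injective : Function.Injective coreVert := fun _ _ h => by
  simp only [coreVert] at h; omega

lemma uVert_ne_vVert (i j : ℕ) : uVert i ≠ vVert j := by
  simp only [uVert, vVert]; omega

lemma uVert_ne_coreVert (i x : ℕ) : uVert i ≠ coreVert x := by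
  simp only [uVert, coreVert]; omega

lemma vVert_ne_coreVert (j x : ℕ) : vVert j ≠ coreVert x := by
  simp only [vVert, coreVert]; omega

def diagonalEdge (i : ℕ) (e : Finset ℕ) : Finset ℕ :=
  insert (uVert i) (insert (vVert i) (e.image coreVert))

def parityEdge (n p : ℕ) (S : Finset ℕ) : Finset ℕ :=
  S.image uVert ∪ (range n \ S).image (vVert ∘ Equiv.swap 0 p)

def oddSubsets (n : ℕ) : Finset (Finset ℕ) := {S ∈ (range n).powerset | Odd #S}

def diagonalEdges (n : ℕ) (C : Finset (Finset ℕ)) : Finset (Finset ℕ) :=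
  (Ico 1 n ×ˢ C).image fun q => diagonalEdge q.1 q.2

/- For odd `n` the paper's edges `V^p_K ∪ (U ∖ U_K)` with `|K|` even are the edges
`U_K' ∪ (V^p ∖ V^p_K')` for the odd complement `K'` of `K`, so only the latter are listed. -/
def parityEdges (n : ℕ) : Finset (Finset ℕ) :=
  (range n).biUnion fun p => (oddSubsets n).image (parityEdge n p)

def hypergraph (n : ℕ) (C : Finset (Finset ℕ)) : Finset (Finset ℕ) :=
  diagonalEdges n C ∪ parityEdges n

lemma card_diagonalEdge (i : ℕ) (e : Finset ℕ) : #(diagonalEdge i e) = #e + 2 := by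
  have hv : vVert i ∉ e.image coreVert := by
    simpa using fun x _ => (vVert_ne_coreVert i x).symm
  have hu : uVert i ∉ insert (vVert i) (e.image coreVert) := by
    simpa [uVert_ne_vVert] using fun x _ => (uVert_ne_coreVert i x).symm
  rw [diagonalEdge, card_insert_of_notMem hu, card_insert_of_notMem hv,
    card_image_of_injective _ coreVert_injective]

lemma card_parityEdge {n : ℕ} (p : ℕ) {S : Finset ℕ} (hS : S ⊆ range n) :
    #(parityEdge n p S) = n := by
  have hdisj : Disjoint (S.image uVert) ((range n \ S).image (vVert ∘ Equiv.swap 0 p)) := by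
    simpa [disjoint_left] using fun i _ j _ _ => (uVert_ne_vVert i _).symm
  rw [parityEdge, card_union_of_disjoint hdisj, card_image_of_injective _ uVert_injective,
    card_image_of_injective _ (vVert_injective.comp (Equiv.injective _)),
    card_sdiff_of_subset hS, card_range]
  have := card_le_card hS
  rw [card_range] at this
  omega

lemma isUniform_hypergraph {n : ℕ} (hn : 2 ≤ n) {C : Finset (Finset ℕ)}
    (hC : IsUniform (n - 2) C) : IsUniform n (hypergraph n C) := by
  refine IsUniform.union (fun e he => ?_) fun e he => ?_
  · obtain ⟨⟨i, e₀⟩, hq, rfl⟩ := mem_image.1 he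
    rw [card_diagonalEdge, hC e₀ (mem_product.1 hq).2]
    omega
  · simp only [parityEdges, oddSubsets, mem_biUnion, mem_image, mem_filter, mem_powerset] at he
    obtain ⟨p, -, S, ⟨hS, -⟩, rfl⟩ := he
    exact card_parityEdge p hS

lemma card_oddSubsets_le {n : ℕ} (hn : 0 < n) : #(oddSubsets n) ≤ 2 ^ (n - 1) := by
  have h := card_powerset_filter_card_mod_two_le (mem_range.2 hn) 1
  simp only [← Nat.odd_iff, card_range] at h
  exact h

lemma card_oddSubsets_filter_separates_le {n p : ℕ} (hn : 3 ≤ n) (hp0 : p ≠ 0) (hpn : p < n) :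
    #{S ∈ oddSubsets n | ¬(0 ∈ S ↔ p ∈ S)} ≤ 2 ^ (n - 2) := by
  set R := range n \ {0, p}
  have hR : #R = n - 2 := by
    rw [card_sdiff_of_subset (by simp [insert_subset_iff, hpn]; omega), card_range,
      card_pair hp0.symm]
  obtain ⟨a, ha⟩ : R.Nonempty := card_pos.1 (by omega)
  calc #{S ∈ oddSubsets n | ¬(0 ∈ S ↔ p ∈ S)}
      ≤ #({T ∈ R.powerset | #T % 2 = 0} ×ˢ (univ : Finset Bool)) := by
        refine card_le_card_of_injOn (fun S => (S \ {0, p}, decide (0 ∈ S)))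
          (fun S hS => ?_) fun S hS T hT h => ?_
        · simp only [coe_filter, oddSubsets, mem_filter, mem_powerset, Set.mem_ofPred_eq] at hS
          have hcard := card_sdiff_pair_add_one hS.2
          simp only [coe_product, coe_filter, Set.mem_prod, mem_powerset, Set.mem_ofPred_eq,
            coe_univ, Set.mem_univ, and_true]
          refine ⟨sdiff_subset_sdiff hS.1.1 subset_rfl, ?_⟩
          obtain ⟨k, hk⟩ := hS.1.2
          omega
        · simp only [coe_filter, oddSubsets, mem_filter, Set.mem_ofPred_eq] at hS hT
          simp only [Prod.mk.injEq, decide_eq_decide] at h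
          rw [← insert_sdiff_pair_eq hS.2, ← insert_sdiff_pair_eq hT.2, h.1]
          simp only [h.2]
    _ ≤ 2 ^ (#R - 1) * 2 := by
        rw [card_product, card_univ, Fintype.card_bool]
        exact Nat.mul_le_mul_right _ (card_powerset_filter_card_mod_two_le ha 0)
    _ = 2 ^ (n - 2) := by
        rw [hR, ← pow_succ]
        congr 1
        omega

lemma parityEdge_eq_of_iff {n p : ℕ} {S : Finset ℕ} (hp : p < n) (h : 0 ∈ S ↔ p ∈ S) :
    parityEdge n p S = parityEdge n 0 S := by
  have hswap : (range n \ S).image (Equiv.swap 0 p) = range n \ S :=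
    image_swap_eq_self (by simp [hp, h]; omega)
  rw [parityEdge, parityEdge, ← image_image, hswap, Equiv.swap_self, Equiv.coe_refl,
    Function.comp_id]

lemma parityEdges_subset (n : ℕ) :
    parityEdges n ⊆ (oddSubsets n).image (parityEdge n 0) ∪
      ((range n).erase 0).biUnion fun p =>
        {S ∈ oddSubsets n | ¬(0 ∈ S ↔ p ∈ S)}.image (parityEdge n p) := by
  intro e he
  simp only [parityEdges, mem_biUnion, mem_image, mem_range] at he
  obtain ⟨p, hp, S, hS, rfl⟩ := he
  by_cases h : 0 ∈ S ↔ p ∈ S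
  · exact mem_union_left _ (mem_image.2 ⟨S, hS, (parityEdge_eq_of_iff hp h).symm⟩)
  · have hp0 : p ≠ 0 := by rintro rfl; exact h Iff.rfl
    exact mem_union_right _ (mem_biUnion.2 ⟨p, mem_erase.2 ⟨hp0, mem_range.2 hp⟩,
      mem_image_of_mem _ (mem_filter.2 ⟨hS, h⟩)⟩)

lemma card_parityEdges_le {n : ℕ} (hn : 3 ≤ n) :
    #(parityEdges n) ≤ (n + 1) * 2 ^ (n - 2) := by
  have hsep : #(((range n).erase 0).biUnion fun p =>
      {S ∈ oddSubsets n | ¬(0 ∈ S ↔ p ∈ S)}.image (parityEdge n p)) ≤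
        (n - 1) * 2 ^ (n - 2) := by
    refine (card_biUnion_le_card_mul _ _ (2 ^ (n - 2)) fun p hp =>
      card_image_le.trans ?_).trans_eq ?_
    · obtain ⟨hp0, hpn⟩ := mem_erase.1 hp
      exact card_oddSubsets_filter_separates_le hn hp0 (mem_range.1 hpn)
    · rw [card_erase_of_mem (mem_range.2 (by omega)), card_range]
  calc #(parityEdges n)
      ≤ 2 ^ (n - 1) + (n - 1) * 2 ^ (n - 2) :=
        (card_le_card (parityEdges_subset n)).trans <| (card_union_le _ _).trans <|
          add_le_add (card_image_le.trans (card_oddSubsets_le (by omega))) hsep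
    _ = (n + 1) * 2 ^ (n - 2) := by
        rw [show n - 1 = n - 2 + 1 by omega, pow_succ, show n + 1 = n - 2 + 1 + 2 by omega]
        ring

lemma card_diagonalEdges_le (n : ℕ) (C : Finset (Finset ℕ)) :
    #(diagonalEdges n C) ≤ (n - 1) * #C := by
  rw [← Nat.card_Ico 1 n, ← card_product]
  exact card_image_le

lemma card_hypergraph_le {n : ℕ} (hn : 3 ≤ n) (C : Finset (Finset ℕ)) :
    #(hypergraph n C) ≤ (n + 1) * 2 ^ (n - 2) + (n - 1) * #C := by
  rw [add_comm]
  exact (card_union_le _ _).trans (add_le_add (card_diagonalEdges_le n C) (card_parityEdges_le hn))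

lemma mono_parityEdge {χ : ℕ → Bool} {n p : ℕ} {S : Finset ℕ} {d : Bool}
    (hu : ∀ i ∈ S, χ (uVert i) = d)
    (hv : ∀ j ∈ range n \ S, χ (vVert (Equiv.swap 0 p j)) = d) :
    Mono χ (parityEdge n p S) :=
  Mono.of_forall_eq fun x hx => by
    simp only [parityEdge, mem_union, mem_image, Function.comp_apply] at hx
    rcases hx with ⟨i, hi, rfl⟩ | ⟨j, hj, rfl⟩
    exacts [hu i hi, hv j hj]

lemma exists_matched_pair_eq {χ : ℕ → Bool} {n p : ℕ} (hn : Odd n) (hp : p < n)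
    (hχ : ∀ e ∈ parityEdges n, ¬ Mono χ e) (c : Bool) :
    ∃ i < n, χ (uVert i) = c ∧ χ (vVert (Equiv.swap 0 p i)) = c := by
  by_contra! h
  obtain ⟨d, S, hS, hSodd, hu, hv⟩ :=
    exists_odd_subset_const_of_not_both (s := range n) (by simpa using hn) (χ ∘ uVert)
      (χ ∘ vVert ∘ Equiv.swap 0 p) fun i hi => h i (mem_range.1 hi)
  refine hχ _ ?_ (mono_parityEdge hu hv)
  exact mem_biUnion.2 ⟨p, mem_range.2 hp,
    mem_image_of_mem _ (mem_filter.2 ⟨mem_powerset.2 hS, hSodd⟩)⟩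

lemma not_colorable2_hypergraph {n : ℕ} (hn : Odd n) {C : Finset (Finset ℕ)}
    (hC : ¬ Colorable2 C) : ¬ Colorable2 (hypergraph n C) := by
  refine not_colorable2_iff.2 fun χ => ?_
  by_contra! hχ
  obtain ⟨e₀, he₀, hmono⟩ := not_colorable2_iff.1 hC (χ ∘ coreVert)
  obtain ⟨c, hc⟩ := hmono.exists_forall_eq
  have hdiag : ∀ i, 1 ≤ i → i < n → χ (uVert i) = c → χ (vVert i) ≠ c := by
    intro i h1 h2 hu hv
    refine hχ (diagonalEdge i e₀) (mem_union_left _ (mem_image.2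
      ⟨(i, e₀), mem_product.2 ⟨mem_Ico.2 ⟨h1, h2⟩, he₀⟩, rfl⟩))
      (Mono.of_forall_eq (c := c) fun x hx => ?_)
    simp only [diagonalEdge, mem_insert, mem_image] at hx
    rcases hx with rfl | rfl | ⟨y, hy, rfl⟩
    exacts [hu, hv, hc y hy]
  have hpar : ∀ e ∈ parityEdges n, ¬ Mono χ e := fun e he => hχ e (mem_union_right _ he)
  obtain ⟨i₀, hi₀, hu₀, hv₀⟩ := exists_matched_pair_eq hn hn.pos hpar c
  rw [Equiv.swap_self, Equiv.refl_apply] at hv₀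
  obtain rfl : i₀ = 0 := by
    by_contra h
    exact hdiag i₀ (by omega) hi₀ hu₀ hv₀
  obtain ⟨j, hj, huj, hvj⟩ := exists_matched_pair_eq hn hn.pos hpar (!c)
  rw [Equiv.swap_self, Equiv.refl_apply] at hvj
  have hj0 : j ≠ 0 := by
    rintro rfl
    simp [hu₀] at huj
  obtain ⟨i, hi, hui, hvi⟩ := exists_matched_pair_eq hn hj hpar c
  rcases eq_or_ne i 0 with rfl | hi0
  · rw [Equiv.swap_apply_left] at hvi
    simp [hvi] at hvj
  rcases eq_or_ne i j with rfl | hij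
  · simp [hui] at huj
  rw [Equiv.swap_apply_of_ne_of_ne hi0 hij] at hvi
  exact hdiag i (by omega) hi hui hvi

end ParityConstruction

open ParityConstruction

/-- First improved recurrence (odd case): for odd `n ≥ 3`,
`m n ≤ (n+1) * 2^(n-2) + (n-1) * m (n-2)`. -/
theorem first_improvement_odd (n : ℕ) (hn : 3 ≤ n) (hodd : Odd n) :
    m n ≤ (n + 1) * 2 ^ (n - 2) + (n - 1) * m (n - 2) := by
  obtain ⟨C, hCU, hCNC, hCcard⟩ := exists_isUniform_not_colorable2_card_eq_m (n - 2)
  calc m n ≤ #(hypergraph n C) :=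
        m_le_card (isUniform_hypergraph (by omega) hCU) (not_colorable2_hypergraph hodd hCNC)
    _ ≤ (n + 1) * 2 ^ (n - 2) + (n - 1) * m (n - 2) := hCcard ▸ card_hypergraph_le hn C
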